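/- arXiv:0908.4560 — 2 statements merged into one kernel-verified Lean document; each statement's English description precedes it below -/
import Mathlib

section
/- Let p ≥ 1 and α_1,…,α_p ∈ [0,1] with α_p > 0, and suppose the greatest common divisor of {i ∈ {1,…,p} : α_i > 0} equals 1. Then ρ(A) is a root of the characteristic polynomial φ of multiplicity one, and every complex root λ of φ with λ ≠ ρ(A) satisfies |λ| < ρ(A). -/
open Polynomial Matrix

noncomputable section

/-- The companion matrix with first row `(α_1, …, α_p)` and subdiagonal entries `1`. -/
def companion (p : ℕ) (α : Fin p → ℝ) : Matrix (Fin p) (Fin p) ℝ :=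
  Matrix.of fun i j => if (i : ℕ) = 0 then α j else if (i : ℕ) = (j : ℕ) + 1 then 1 else 0

/-- `φ(λ) = λ^p − α_1 λ^{p−1} − ⋯ − α_p`, where `α i` (0-indexed) is `α_{i+1}`. -/
def phiPoly (p : ℕ) (α : Fin p → ℝ) : Polynomial ℝ :=
  X ^ p - ∑ k : Fin p, C (α k) * X ^ (p - 1 - (k : ℕ))

/-- The spectral radius of a real matrix: the maximum (supremum) of the moduli of its
complex eigenvalues. -/
def specRad {p : ℕ} (A : Matrix (Fin p) (Fin p) ℝ) : ℝ :=
  sSup {r : ℝ | ∃ z ∈ spectrum ℂ (A.map (Complex.ofReal : ℝ → ℂ)), ‖z‖ = r}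

/-!
The eigenvalues of `A` are exactly the roots of `φ` (an eigenvector for `λ` is
`(λ^(p-1), …, λ, 1)`). For `x ≠ 0`, dividing `φ(x) = 0` by `x^p` turns it into
`∑ α_k t^(k+1) = 1` with `t = x⁻¹`. The left side has nonnegative coefficients, so on `[0, ∞)`
it is strictly increasing and has a unique solution `s > 0`, and by the triangle inequality
every complex solution has `|t| ≥ s`; hence `ρ(A) = s⁻¹`. If `|t| = s`, equality in the triangle
inequality forces `(t/s)^(k+1) = 1` whenever `α_k > 0`, and the gcd condition gives `t = s`.
Finally `ρ(A)` is a simple root because at a root `r`, `r φ'(r) = ∑ (k+1) α_k r^(p-1-k) > 0`.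
-/

theorem Matrix.mem_spectrum_iff_exists_mulVec_eq_smul {K n : Type*} [Field K] [Fintype n]
    [DecidableEq n] (A : Matrix n n K) (μ : K) :
    μ ∈ spectrum K A ↔ ∃ v ≠ 0, A *ᵥ v = μ • v := by
  rw [← Matrix.spectrum_toLin', ← Module.End.hasEigenvalue_iff_mem_spectrum,
    Module.End.hasEigenvalue_iff, Submodule.ne_bot_iff]
  simp [and_comm]

theorem eq_one_of_pow_eq_one_of_gcd_eq_one {M ι : Type*} [Monoid M] {s : Finset ι} {n : ι → ℕ}
    (hn : s.gcd n = 1) {x : M} (hx : ∀ i ∈ s, x ^ n i = 1) : x = 1 :=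
  orderOf_eq_one_iff.1 <| Nat.dvd_one.1 <| hn ▸ Finset.dvd_gcd fun i hi =>
    orderOf_dvd_of_pow_eq_one (hx i hi)

theorem Complex.eq_one_of_sum_mul_eq_sum {ι : Type*} {s : Finset ι} {β : ι → ℝ}
    (hβ : ∀ i ∈ s, 0 ≤ β i) {u : ι → ℂ} (hu : ∀ i ∈ s, ‖u i‖ ≤ 1)
    (h : ∑ i ∈ s, (β i : ℂ) * u i = ∑ i ∈ s, (β i : ℂ)) {i : ι} (hi : i ∈ s) (hβi : 0 < β i) :
    u i = 1 := by
  have hre (j) (hj : j ∈ s) : (u j).re ≤ 1 := (Complex.re_le_norm _).trans (hu j hj)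
  have hzero : ∑ j ∈ s, β j * (1 - (u j).re) = 0 := by
    have := congrArg Complex.re h
    simp only [Complex.re_sum, Complex.re_ofReal_mul, Complex.ofReal_re] at this
    simp only [mul_sub, mul_one, Finset.sum_sub_distrib, this, sub_self]
  have hre_i : (u i).re = 1 := by
    have := (Finset.sum_eq_zero_iff_of_nonneg fun j hj =>
      mul_nonneg (hβ j hj) (sub_nonneg.2 (hre j hj))).1 hzero i hi
    rcases mul_eq_zero.1 this with h | h <;> linarith
  have him_i : (u i).im = 0 := by
    have hnormSq := Complex.sq_norm (u i)
    rw [Complex.normSq_apply, hre_i] at hnormSq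
    nlinarith [hu i hi, norm_nonneg (u i)]
  exact Complex.ext hre_i him_i

section

variable {p : ℕ} {α : Fin p → ℝ}

theorem aeval_phiPoly {A : Type*} [CommRing A] [Algebra ℝ A] (x : A) :
    aeval x (phiPoly p α) = x ^ p - ∑ k : Fin p, algebraMap ℝ A (α k) * x ^ (p - 1 - (k : ℕ)) := by
  simp [phiPoly]

theorem aeval_phiPoly_eq_zero_iff {K : Type*} [Field K] [Algebra ℝ K] {x : K} (hx : x ≠ 0) :
    aeval x (phiPoly p α) = 0 ↔ ∑ k : Fin p, algebraMap ℝ K (α k) * x⁻¹ ^ ((k : ℕ) + 1) = 1 := by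
  have hpow (k : Fin p) : x ^ (p - 1 - (k : ℕ)) = x ^ p * x⁻¹ ^ ((k : ℕ) + 1) := by
    rw [← pow_sub_mul_pow x (show (k : ℕ) + 1 ≤ p from k.isLt), mul_assoc, ← mul_pow,
      mul_inv_cancel₀ hx, one_pow, mul_one, Nat.sub_sub, Nat.add_comm]
  simp_rw [aeval_phiPoly, hpow, mul_left_comm _ (x ^ p), ← Finset.mul_sum, ← mul_one_sub,
    mul_eq_zero, pow_eq_zero_iff', sub_eq_zero, eq_comm (a := (1 : K))]
  simp [hx]

theorem companion_mulVec_apply_of_val_eq_zero {K : Type*} [Semiring K] [Algebra ℝ K]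
    (v : Fin p → K) {i : Fin p} (hi : (i : ℕ) = 0) :
    ((companion p α).map (algebraMap ℝ K) *ᵥ v) i = ∑ j, algebraMap ℝ K (α j) * v j := by
  simp [Matrix.mulVec, dotProduct, companion, hi]

theorem companion_mulVec_apply_of_val_eq_succ {K : Type*} [Semiring K] [Algebra ℝ K]
    (v : Fin p → K) {i j : Fin p} (hij : (i : ℕ) = j + 1) :
    ((companion p α).map (algebraMap ℝ K) *ᵥ v) i = v j := by
  simp [Matrix.mulVec, dotProduct, companion, hij, Fin.val_inj]

theorem eq_pow_mul_of_companion_mulVec_eq_smul {K : Type*} [Semiring K] [Algebra ℝ K]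
    {v : Fin p → K} {μ : K} (hAv : (companion p α).map (algebraMap ℝ K) *ᵥ v = μ • v)
    {last : Fin p} (hlast : (last : ℕ) = p - 1) (i : Fin p) :
    v i = μ ^ (p - 1 - (i : ℕ)) * v last := by
  have hshift (i j : Fin p) (hij : (i : ℕ) = j + 1) : v j = μ * v i := by
    rw [← companion_mulVec_apply_of_val_eq_succ v hij, hAv, Pi.smul_apply, smul_eq_mul]
  suffices ∀ m, ∀ i : Fin p, (i : ℕ) + m = p - 1 → v i = μ ^ m * v last from this _ i (by omega)
  intro m
  induction m with
  | zero =>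
    intro i hi
    obtain rfl : i = last := Fin.ext (by omega)
    rw [pow_zero, one_mul]
  | succ m ih =>
    intro i hi
    rw [hshift ⟨i + 1, by omega⟩ i rfl, ih _ (by simp only; omega), pow_succ', mul_assoc]

theorem mem_spectrum_companion_iff {K : Type*} [Field K] [Algebra ℝ K] (μ : K) :
    μ ∈ spectrum K ((companion p α).map (algebraMap ℝ K)) ↔ aeval μ (phiPoly p α) = 0 := by
  rw [Matrix.mem_spectrum_iff_exists_mulVec_eq_smul, aeval_phiPoly, sub_eq_zero]
  constructor
  · rintro ⟨v, hv, hAv⟩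
    have hp : 0 < p := Fin.pos_iff_nonempty.2 (Function.ne_iff.1 hv).nonempty
    set last : Fin p := ⟨p - 1, by omega⟩
    have hv_eq := eq_pow_mul_of_companion_mulVec_eq_smul hAv (last := last) rfl
    have hlast : v last ≠ 0 := fun h => hv (funext fun i => by rw [hv_eq i, h, mul_zero]; rfl)
    have hrow := congrFun hAv ⟨0, hp⟩
    rw [companion_mulVec_apply_of_val_eq_zero v rfl, Pi.smul_apply, smul_eq_mul] at hrow
    have hsum : ∑ j, algebraMap ℝ K (α j) * v j
        = (∑ j : Fin p, algebraMap ℝ K (α j) * μ ^ (p - 1 - (j : ℕ))) * v last := by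
      rw [Finset.sum_mul]
      exact Finset.sum_congr rfl fun j _ => by rw [hv_eq j, mul_assoc]
    rw [hv_eq, hsum, ← mul_assoc, ← pow_succ', Nat.sub_zero, Nat.sub_add_cancel hp] at hrow
    exact mul_right_cancel₀ hlast hrow.symm
  · intro h
    have hp : 0 < p := by
      rcases p with _ | p
      · simp at h
      · omega
    refine ⟨fun i => μ ^ (p - 1 - (i : ℕ)),
      fun h0 => by simpa using congrFun h0 ⟨p - 1, by omega⟩, funext fun i => ?_⟩
    rw [Pi.smul_apply, smul_eq_mul, ← pow_succ']
    rcases i with ⟨_ | j, hi⟩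
    · rw [companion_mulVec_apply_of_val_eq_zero _ rfl, ← h, Nat.sub_zero, Nat.sub_add_cancel hp]
    · rw [companion_mulVec_apply_of_val_eq_succ _ (j := ⟨j, by omega⟩) rfl]
      congr 1
      simp only
      omega

theorem mul_eval_derivative_phiPoly (x : ℝ) :
    x * (derivative (phiPoly p α)).eval x
      = p * x ^ p - ∑ k : Fin p, α k * ((p - 1 - (k : ℕ) : ℕ) : ℝ) * x ^ (p - 1 - (k : ℕ)) := by
  have hpow (n : ℕ) : x * ((n : ℝ) * x ^ (n - 1)) = n * x ^ n := by
    cases n <;> simp [pow_succ]; ring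
  simp only [phiPoly, derivative_sub, derivative_X_pow, derivative_sum, derivative_C_mul,
    eval_sub, eval_mul, eval_C, eval_pow, eval_X, eval_finsetSum, mul_sub, Finset.mul_sum, hpow]
  congr 1
  exact Finset.sum_congr rfl fun k _ => by rw [mul_left_comm, hpow, mul_assoc]

theorem rootMultiplicity_phiPoly_eq_one (hα : ∀ k, 0 ≤ α k) (hpos : ∃ k, 0 < α k) {r : ℝ}
    (hr : 0 < r) (hroot : (phiPoly p α).IsRoot r) :
    (phiPoly p α).rootMultiplicity r = 1 := by
  have hroot' : r ^ p = ∑ k : Fin p, α k * r ^ (p - 1 - (k : ℕ)) := by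
    simpa [IsRoot, phiPoly, eval_finsetSum, sub_eq_zero] using hroot
  have heuler : r * (derivative (phiPoly p α)).eval r
      = ∑ k : Fin p, ((k : ℕ) + 1 : ℝ) * α k * r ^ (p - 1 - (k : ℕ)) := by
    rw [mul_eval_derivative_phiPoly, hroot', Finset.mul_sum, ← Finset.sum_sub_distrib]
    refine Finset.sum_congr rfl fun k _ => ?_
    have hcast : ((p - 1 - (k : ℕ) : ℕ) : ℝ) + ((k : ℕ) + 1) = p := by
      exact_mod_cast (by omega : p - 1 - (k : ℕ) + ((k : ℕ) + 1) = p)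
    rw [← hcast]
    ring
  have hderiv : 0 < r * (derivative (phiPoly p α)).eval r := by
    obtain ⟨k₀, hk₀⟩ := hpos
    rw [heuler]
    exact Finset.sum_pos' (fun k _ => by have := hα k; positivity)
      ⟨k₀, Finset.mem_univ _, by positivity⟩
  have hne : phiPoly p α ≠ 0 := by
    rintro h
    simp [h] at hderiv
  have hsimple : ¬ 1 < (phiPoly p α).rootMultiplicity r := fun h => by
    simp [((one_lt_rootMultiplicity_iff_isRoot hne).1 h).2.eq_zero] at hderiv
  have := (rootMultiplicity_pos hne).2 hroot
  omega

theorem strictMonoOn_sum_mul_pow_succ (hα : ∀ k, 0 ≤ α k) (hpos : ∃ k, 0 < α k) :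
    StrictMonoOn (fun t : ℝ => ∑ k, α k * t ^ ((k : ℕ) + 1)) (Set.Ici 0) := by
  intro a ha b _ hab
  obtain ⟨k₀, hk₀⟩ := hpos
  refine Finset.sum_lt_sum (fun k _ => ?_) ⟨k₀, Finset.mem_univ _, ?_⟩
  · exact mul_le_mul_of_nonneg_left (pow_le_pow_left₀ ha hab.le _) (hα k)
  · exact mul_lt_mul_of_pos_left (pow_lt_pow_left₀ hab ha (Nat.succ_ne_zero _)) hk₀

theorem exists_pos_sum_mul_pow_succ_eq_one (hα : ∀ k, 0 ≤ α k) (hpos : ∃ k, 0 < α k) :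
    ∃ s > 0, ∑ k, α k * s ^ ((k : ℕ) + 1) = 1 := by
  obtain ⟨k₀, hk₀⟩ := hpos
  set T := max 1 (α k₀)⁻¹
  have hT : 1 ≤ T := le_max_left _ _
  have hST : 1 ≤ ∑ k, α k * T ^ ((k : ℕ) + 1) :=
    calc 1 ≤ α k₀ * T := by
          rw [← inv_mul_le_iff₀ hk₀, mul_one]; exact le_max_right _ _
      _ ≤ α k₀ * T ^ ((k₀ : ℕ) + 1) :=
          mul_le_mul_of_nonneg_left (le_self_pow₀ hT (Nat.succ_ne_zero _)) hk₀.le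
      _ ≤ _ := Finset.single_le_sum (f := fun k : Fin p => α k * T ^ ((k : ℕ) + 1))
          (fun k _ => mul_nonneg (hα k) (by positivity)) (Finset.mem_univ k₀)
  obtain ⟨s, hs, hSs⟩ := intermediate_value_Icc (zero_le_one.trans hT)
    (by fun_prop : Continuous fun t : ℝ => ∑ k, α k * t ^ ((k : ℕ) + 1)).continuousOn
    ⟨by simp, hST⟩
  refine ⟨s, hs.1.lt_of_ne ?_, hSs⟩
  rintro rfl
  simp at hSs

theorem norm_sum_mul_pow_succ_le (hα : ∀ k, 0 ≤ α k) (w : ℂ) :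
    ‖∑ k, (α k : ℂ) * w ^ ((k : ℕ) + 1)‖ ≤ ∑ k, α k * ‖w‖ ^ ((k : ℕ) + 1) :=
  (norm_sum_le _ _).trans_eq <| Finset.sum_congr rfl fun k _ => by
    rw [norm_mul, norm_pow, Complex.norm_real, Real.norm_of_nonneg (hα k)]

theorem le_norm_of_sum_mul_pow_succ_eq_one (hα : ∀ k, 0 ≤ α k) (hpos : ∃ k, 0 < α k)
    {s : ℝ} (hs : 0 ≤ s) (hS : ∑ k, α k * s ^ ((k : ℕ) + 1) = 1) {w : ℂ}
    (hw : ∑ k, (α k : ℂ) * w ^ ((k : ℕ) + 1) = 1) : s ≤ ‖w‖ := by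
  by_contra! hlt
  have hsmall : ∑ k, α k * ‖w‖ ^ ((k : ℕ) + 1) < 1 :=
    hS ▸ strictMonoOn_sum_mul_pow_succ hα hpos (norm_nonneg w) hs hlt
  have hbound := norm_sum_mul_pow_succ_le hα w
  rw [hw, norm_one] at hbound
  linarith

theorem eq_of_sum_mul_pow_succ_eq_one_of_norm_eq (hα : ∀ k, 0 ≤ α k)
    (hgcd : (Finset.univ.filter fun k : Fin p => 0 < α k).gcd (fun k => (k : ℕ) + 1) = 1)
    {s : ℝ} (hs : 0 < s) (hS : ∑ k, α k * s ^ ((k : ℕ) + 1) = 1) {w : ℂ}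
    (hw : ∑ k, (α k : ℂ) * w ^ ((k : ℕ) + 1) = 1) (hnorm : ‖w‖ = s) : w = s := by
  have hs' : (s : ℂ) ≠ 0 := Complex.ofReal_ne_zero.2 hs.ne'
  set u := w / s
  have hu : ‖u‖ = 1 := by
    rw [norm_div, Complex.norm_real, Real.norm_of_nonneg hs.le, hnorm, div_self hs.ne']
  have hsum : ∑ k, ((α k * s ^ ((k : ℕ) + 1) : ℝ) : ℂ) * u ^ ((k : ℕ) + 1)
      = ∑ k, ((α k * s ^ ((k : ℕ) + 1) : ℝ) : ℂ) := by
    rw [← Complex.ofReal_sum, hS, Complex.ofReal_one, ← hw]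
    refine Finset.sum_congr rfl fun k _ => ?_
    simp only [u, div_pow, Complex.ofReal_mul, Complex.ofReal_pow]
    field_simp
  have hroots (k) (hk : k ∈ Finset.univ.filter fun k : Fin p => 0 < α k) :
      u ^ ((k : ℕ) + 1) = 1 :=
    Complex.eq_one_of_sum_mul_eq_sum (fun k _ => mul_nonneg (hα k) (pow_nonneg hs.le _))
      (fun k _ => by rw [norm_pow, hu, one_pow]) hsum (Finset.mem_univ k)
      (mul_pos (Finset.mem_filter.1 hk).2 (pow_pos hs _))
  exact (div_eq_one_iff_eq hs').1 (eq_one_of_pow_eq_one_of_gcd_eq_one hgcd hroots)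

theorem norm_le_inv_of_aeval_phiPoly_eq_zero (hα : ∀ k, 0 ≤ α k) (hpos : ∃ k, 0 < α k)
    {s : ℝ} (hs : 0 < s) (hS : ∑ k, α k * s ^ ((k : ℕ) + 1) = 1) {z : ℂ}
    (hz : aeval z (phiPoly p α) = 0) : ‖z‖ ≤ s⁻¹ := by
  rcases eq_or_ne z 0 with rfl | hz0
  · simpa using hs.le
  rw [aeval_phiPoly_eq_zero_iff hz0] at hz
  have := le_norm_of_sum_mul_pow_succ_eq_one hα hpos hs.le hS (w := z⁻¹) (by simpa using hz)
  rwa [norm_inv, le_inv_comm₀ hs (norm_pos_iff.2 hz0)] at this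

theorem eq_inv_of_aeval_phiPoly_eq_zero_of_norm_eq (hα : ∀ k, 0 ≤ α k)
    (hgcd : (Finset.univ.filter fun k : Fin p => 0 < α k).gcd (fun k => (k : ℕ) + 1) = 1)
    {s : ℝ} (hs : 0 < s) (hS : ∑ k, α k * s ^ ((k : ℕ) + 1) = 1) {z : ℂ}
    (hz : aeval z (phiPoly p α) = 0) (hnorm : ‖z‖ = s⁻¹) : z = (s⁻¹ : ℝ) := by
  have hz0 : z ≠ 0 := norm_pos_iff.1 (hnorm ▸ inv_pos.2 hs)
  rw [aeval_phiPoly_eq_zero_iff hz0] at hz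
  have := eq_of_sum_mul_pow_succ_eq_one_of_norm_eq hα hgcd hs hS (w := z⁻¹) (by simpa using hz)
    (by rw [norm_inv, hnorm, inv_inv])
  rw [← inv_inv z, this, Complex.ofReal_inv]

theorem specRad_companion_eq_inv (hα : ∀ k, 0 ≤ α k) (hpos : ∃ k, 0 < α k) {s : ℝ}
    (hs : 0 < s) (hS : ∑ k, α k * s ^ ((k : ℕ) + 1) = 1) :
    specRad (companion p α) = s⁻¹ := by
  have hspec (z : ℂ) :
      z ∈ spectrum ℂ ((companion p α).map Complex.ofReal) ↔ aeval z (phiPoly p α) = 0 := by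
    rw [← Complex.coe_algebraMap, mem_spectrum_companion_iff]
  refine IsGreatest.csSup_eq ⟨⟨(s⁻¹ : ℝ), ?_, ?_⟩, ?_⟩
  · rw [hspec, aeval_phiPoly_eq_zero_iff (by simpa using hs.ne')]
    simpa using congrArg Complex.ofReal hS
  · rw [Complex.norm_real, Real.norm_of_nonneg (inv_nonneg.2 hs.le)]
  · rintro _ ⟨z, hz, rfl⟩
    exact norm_le_inv_of_aeval_phiPoly_eq_zero hα hpos hs hS ((hspec z).1 hz)

end

/-- in the primitive case, `ρ(A)` is a root of `φ` of multiplicity one, and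
every complex root `λ ≠ ρ(A)` of `φ` satisfies `|λ| < ρ(A)`. -/
theorem specRad_simple_and_dominant_root
    (p : ℕ) (α : Fin p → ℝ)
    (hα : ∀ i, α i ∈ Set.Icc (0 : ℝ) 1)
    (hgcd : (Finset.univ.filter fun i : Fin p => 0 < α i).gcd
        (fun i => (i : ℕ) + 1) = 1) :
    (phiPoly p α).rootMultiplicity (specRad (companion p α)) = 1 ∧
    ∀ z : ℂ, ((phiPoly p α).map (algebraMap ℝ ℂ)).IsRoot z →
      z ≠ (specRad (companion p α) : ℂ) →
      ‖z‖ < specRad (companion p α) := by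
  have hα₀ (k : Fin p) : 0 ≤ α k := (hα k).1
  have hpos : ∃ k, 0 < α k := by
    by_contra! h
    rw [Finset.filter_false_of_mem fun k _ => (h k).not_gt, Finset.gcd_empty] at hgcd
    exact zero_ne_one hgcd
  obtain ⟨s, hs, hS⟩ := exists_pos_sum_mul_pow_succ_eq_one hα₀ hpos
  rw [specRad_companion_eq_inv hα₀ hpos hs hS]
  refine ⟨rootMultiplicity_phiPoly_eq_one hα₀ hpos (inv_pos.2 hs) ?_, fun z hz hne => ?_⟩
  · rw [IsRoot, ← coe_aeval_eq_eval, aeval_phiPoly_eq_zero_iff (inv_ne_zero hs.ne')]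
    simpa using hS
  · rw [IsRoot, eval_map_algebraMap] at hz
    exact (norm_le_inv_of_aeval_phiPoly_eq_zero hα₀ hpos hs hS hz).lt_of_ne fun h =>
      hne (eq_inv_of_aeval_phiPoly_eq_zero_of_norm_eq hα₀ hgcd hs hS hz h)

end
end

section
/- Let p ≥ 1 and α_1,…,α_p ∈ [0,1] with α_p > 0, let A be the associated p×p companion matrix and r = ρ(A), and let u ∈ ℝ^p be given by u_i = r^{−i+1} / Σ_{k=1}^p r^{−k+1}. Define v ∈ ℝ^p by v_i = (Σ_{k=1}^p r^{−k+1}) / (Σ_{k=1}^p k α_k r^{−k}) · Σ_{ℓ=i}^p α_ℓ r^{i−1−ℓ} for i = 1,…,p. Then all coordinates of v are strictly positive, Aᵀ v = r v, and uᵀ v = 1. -/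
open Matrix

noncomputable section

/-- The right Perron vector `u_i = r^{−i+1} / Σ_{k=1}^p r^{−k+1}` (1-indexed), written here
with 0-based indices. -/
def perronU (p : ℕ) (r : ℝ) : Fin p → ℝ :=
  fun i => r ^ (-(i : ℤ)) / ∑ k : Fin p, r ^ (-(k : ℤ))

/-- The left Perron vector
`v_i = (Σ_{k=1}^p r^{−k+1}) / (Σ_{k=1}^p k α_k r^{−k}) · Σ_{ℓ=i}^p α_ℓ r^{i−1−ℓ}`
(1-indexed), written here with 0-based indices. -/
def perronV (p : ℕ) (α : Fin p → ℝ) (r : ℝ) : Fin p → ℝ :=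
  fun i => (∑ k : Fin p, r ^ (-(k : ℤ))) /
      (∑ k : Fin p, ((k : ℕ) + 1 : ℝ) * α k * r ^ (-((k : ℕ) + 1 : ℤ))) *
      ∑ ℓ ∈ Finset.univ.filter (fun ℓ : Fin p => i ≤ ℓ),
        α ℓ * r ^ ((i : ℤ) - (ℓ : ℤ) - 1)

/-! Let `c > 0` solve `∑_ℓ α_ℓ c^{-ℓ-1} = 1`, which exists by the intermediate value theorem.
The tail sums `T_i = ∑_{ℓ ≥ i} α_ℓ c^{i-ℓ-1}` are positive and satisfy `T_0 = 1` and
`c T_j = α_j + T_{j+1}`, i.e. `Aᵀ T = c T`; dually `u_i = c^{-i}` satisfies `A u = c u`, so `c` is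
an eigenvalue. If `A v = z v` over `ℂ`, then `A ≥ 0` gives `|z| |v| ≤ A |v|` entrywise, and
pairing with the positive left eigenvector `T` yields `|z| ≤ c`; hence `ρ(A) = c`. Finally `v` is
a positive multiple of `T`, and `uᵀ v = 1` reduces to `∑_i c^{-i} T_i = ∑_k (k+1) α_k c^{-k-1}`. -/

namespace Matrix

variable {n : Type*} [Fintype n] [DecidableEq n]

theorem mem_spectrum_iff_exists_mulVec_eq_smul_s7 {K : Type*} [Field K] {A : Matrix n n K} {z : K} :
    z ∈ spectrum K A ↔ ∃ v ≠ 0, A *ᵥ v = z • v := by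
  rw [← spectrum_toLin', ← Module.End.hasEigenvalue_iff_mem_spectrum]
  constructor
  · intro h
    obtain ⟨v, hv⟩ := h.exists_hasEigenvector
    exact ⟨v, hv.2, hv.apply_eq_smul⟩
  · rintro ⟨v, hv0, hv⟩
    exact Module.End.hasEigenvalue_of_hasEigenvector
      ⟨Module.End.mem_eigenspace_iff.mpr hv, hv0⟩

theorem map_mem_spectrum_map_of_mulVec_eq_smul {K L : Type*} [Field K] [Field L] (f : K →+* L)
    {A : Matrix n n K} {u : n → K} {c : K} (hu : u ≠ 0) (hAu : A *ᵥ u = c • u) :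
    f c ∈ spectrum L (A.map f) := by
  refine mem_spectrum_iff_exists_mulVec_eq_smul_s7.mpr ⟨f ∘ u, ?_, ?_⟩
  · simpa [funext_iff] using hu
  · ext i
    simp [← RingHom.map_mulVec, hAu]

theorem norm_le_of_mem_spectrum_of_pos_left_eigenvector {A : Matrix n n ℝ}
    (hA : ∀ i j, 0 ≤ A i j) {y : n → ℝ} (hy : ∀ i, 0 < y i) {c : ℝ} (hyA : Aᵀ *ᵥ y = c • y)
    {z : ℂ} (hz : z ∈ spectrum ℂ (A.map Complex.ofReal)) : ‖z‖ ≤ c := by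
  obtain ⟨v, hv0, hv⟩ := mem_spectrum_iff_exists_mulVec_eq_smul_s7.mp hz
  have hpos : 0 < ∑ i, y i * ‖v i‖ := by
    obtain ⟨i, hi⟩ := Function.ne_iff.mp hv0
    exact Finset.sum_pos' (fun i _ => mul_nonneg (hy i).le (norm_nonneg _))
      ⟨i, Finset.mem_univ _, mul_pos (hy i) (norm_pos_iff.mpr hi)⟩
  have hrow : ∀ i, ‖z‖ * ‖v i‖ ≤ ∑ j, A i j * ‖v j‖ := fun i =>
    calc ‖z‖ * ‖v i‖ = ‖(A.map Complex.ofReal *ᵥ v) i‖ := by rw [hv]; simp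
      _ ≤ ∑ j, ‖(A i j : ℂ) * v j‖ := norm_sum_le _ _
      _ = ∑ j, A i j * ‖v j‖ := by simp [abs_of_nonneg (hA _ _)]
  have hcol : ∀ j, ∑ i, y i * A i j = c * y j := fun j => by
    simpa [mulVec, dotProduct, mul_comm] using congrFun hyA j
  refine le_of_mul_le_mul_right ?_ hpos
  calc ‖z‖ * ∑ i, y i * ‖v i‖ = ∑ i, y i * (‖z‖ * ‖v i‖) := by
        simp only [Finset.mul_sum, mul_left_comm]
    _ ≤ ∑ i, y i * ∑ j, A i j * ‖v j‖ :=
        Finset.sum_le_sum fun i _ => mul_le_mul_of_nonneg_left (hrow i) (hy i).le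
    _ = ∑ j, (∑ i, y i * A i j) * ‖v j‖ := by
        simp only [Finset.mul_sum, Finset.sum_mul, mul_assoc]
        exact Finset.sum_comm
    _ = c * ∑ j, y j * ‖v j‖ := by
        simp only [hcol, Finset.mul_sum, mul_assoc]

end Matrix

theorem specRad_eq_of_mem_spectrum {n : ℕ} {A : Matrix (Fin n) (Fin n) ℝ} {c : ℝ} (hc : 0 ≤ c)
    (hmem : (c : ℂ) ∈ spectrum ℂ (A.map Complex.ofReal))
    (hle : ∀ z ∈ spectrum ℂ (A.map Complex.ofReal), ‖z‖ ≤ c) : specRad A = c :=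
  IsGreatest.csSup_eq ⟨⟨c, hmem, by simp [hc]⟩, by rintro _ ⟨z, hz, rfl⟩; exact hle z hz⟩

section companion

variable {p : ℕ} (α : Fin p → ℝ)

theorem companion_nonneg {α : Fin p → ℝ} (hα : ∀ i, 0 ≤ α i) (i j : Fin p) :
    0 ≤ companion p α i j := by
  simp only [companion, of_apply]
  split_ifs <;> simp [hα]

theorem companion_mulVec (W : ℕ → ℝ) (i : Fin p) :
    (companion p α *ᵥ fun j => W j) i = if (i : ℕ) = 0 then ∑ j, α j * W j else W (i - 1) := by
  split_ifs with hi
  · simp [mulVec, dotProduct, companion, hi]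
  · have hcond : ∀ j : ℕ, ((i : ℕ) = j + 1) = (j = i - 1) := fun j =>
      propext ⟨fun _ => by omega, fun _ => by omega⟩
    simp only [mulVec, dotProduct, companion, of_apply, if_neg hi, ite_mul, one_mul, zero_mul,
      hcond, Fin.sum_univ_eq_sum_range (fun j => if j = (i : ℕ) - 1 then W j else 0)]
    rw [Finset.sum_ite_eq', if_pos (Finset.mem_range.mpr (by omega : (i : ℕ) - 1 < p))]

theorem companion_transpose_mulVec {W : ℕ → ℝ} (hW : W p = 0) (j : Fin p) :
    ((companion p α)ᵀ *ᵥ fun i => W i) j = α j * W 0 + W (j + 1) := by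
  obtain ⟨n, rfl⟩ : ∃ n, p = n + 1 := Nat.exists_eq_add_one.mpr j.pos
  simp only [mulVec, dotProduct, transpose_apply, companion, of_apply]
  rw [Fin.sum_univ_eq_sum_range
      (fun i => (if i = 0 then α j else if i = j + 1 then 1 else 0) * W i),
    Finset.sum_range_succ']
  simp only [add_left_inj, if_true, Nat.add_one_ne_zero, if_false, ite_mul, one_mul, zero_mul]
  rw [Finset.sum_ite_eq', add_comm]
  split_ifs with hj
  · rfl
  · rw [show (j : ℕ) = n by simp at hj; omega, hW]

end companion

section tailSum

variable {p : ℕ} (α : Fin p → ℝ) (c : ℝ)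

/-- The tail sums `T_i = ∑_{ℓ ≥ i} α_ℓ c^{i-ℓ-1}` of `perronV`, indexed by `ℕ` so that
`c T_j = α_j + T_{j+1}` holds at the last index too, with `T_p = 0`. -/
def tailSum (i : ℕ) : ℝ :=
  ∑ ℓ ∈ Finset.univ.filter (fun ℓ : Fin p => i ≤ (ℓ : ℕ)), α ℓ * c ^ ((i : ℤ) - ℓ - 1)

theorem tailSum_eq_zero_of_le {i : ℕ} (hi : p ≤ i) : tailSum α c i = 0 := by
  simp [tailSum, Finset.filter_false_of_mem, fun ℓ : Fin p => not_le.mpr (ℓ.2.trans_le hi)]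

theorem tailSum_zero : tailSum α c 0 = ∑ ℓ, α ℓ * c ^ (-(ℓ : ℤ) - 1) := by
  simp [tailSum]

variable {α c}

theorem tailSum_pos (hα : ∀ i, 0 ≤ α i) {ℓ : Fin p} (hℓ : 0 < α ℓ) (hc : 0 < c) {i : ℕ}
    (hi : i ≤ ℓ) : 0 < tailSum α c i :=
  Finset.sum_pos' (fun k _ => mul_nonneg (hα k) (zpow_pos hc _).le)
    ⟨ℓ, by simpa using hi, mul_pos hℓ (zpow_pos hc _)⟩

theorem mul_tailSum (hc : c ≠ 0) (j : Fin p) :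
    c * tailSum α c j = α j + tailSum α c (j + 1) := by
  have hterm : ∀ ℓ : Fin p,
      c * (if (j : ℕ) ≤ ℓ then α ℓ * c ^ ((j : ℤ) - ℓ - 1) else 0) =
        (if ℓ = j then α ℓ else 0) +
          if (j : ℕ) + 1 ≤ ℓ then α ℓ * c ^ (((j + 1 : ℕ) : ℤ) - ℓ - 1) else 0 := fun ℓ => by
    rcases lt_trichotomy (ℓ : ℕ) j with h | h | h
    · simp [Fin.ext_iff, h.ne, not_le.mpr h, show ¬ (j : ℕ) + 1 ≤ ℓ by omega]
    · simp [Fin.ext h, mul_left_comm c, hc]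
    · rw [if_pos h.le, if_neg (by simp [Fin.ext_iff]; omega),
        if_pos (show (j : ℕ) + 1 ≤ ℓ from h), zero_add, mul_left_comm, ← zpow_one_add₀ hc]
      push_cast
      ring_nf
  simp only [tailSum, Finset.mul_sum, Finset.sum_filter, hterm, Finset.sum_add_distrib,
    Finset.sum_ite_eq', Finset.mem_univ, if_true]

theorem sum_zpow_mul_tailSum (hc : c ≠ 0) :
    ∑ i : Fin p, c ^ (-(i : ℤ)) * tailSum α c i =
      ∑ k : Fin p, ((k : ℕ) + 1 : ℝ) * α k * c ^ (-((k : ℕ) + 1 : ℤ)) := by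
  have hterm : ∀ i ℓ : Fin p, c ^ (-(i : ℤ)) * (α ℓ * c ^ ((i : ℤ) - ℓ - 1)) =
      α ℓ * c ^ (-((ℓ : ℕ) + 1 : ℤ)) := fun i ℓ => by
    rw [mul_left_comm, ← zpow_add₀ hc]
    ring_nf
  have hcard : ∀ k : Fin p,
      (Finset.univ.filter fun i : Fin p => (i : ℕ) ≤ k).card = (k : ℕ) + 1 :=
    fun k => by simp [Finset.filter_ge_eq_Iic]
  simp only [tailSum, Finset.mul_sum, Finset.sum_filter, mul_ite, mul_zero, hterm]
  rw [Finset.sum_comm]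
  refine Finset.sum_congr rfl fun k _ => ?_
  rw [← Finset.sum_filter, Finset.sum_const, hcard, nsmul_eq_mul]
  push_cast
  ring

theorem exists_pos_tailSum_zero_eq_one (hα : ∀ i, 0 ≤ α i) {ℓ : Fin p} (hℓ : 0 < α ℓ) :
    ∃ c > 0, tailSum α c 0 = 1 := by
  set a := min 1 (α ℓ)
  set b := max 1 (∑ i, α i)
  have ha : 0 < a := lt_min one_pos hℓ
  have hab : a ≤ b := (min_le_left _ _).trans (le_max_left _ _)
  have hcont : ContinuousOn (fun t => tailSum α t 0) (Set.Icc a b) := by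
    simp only [tailSum_zero]
    refine continuousOn_finsetSum _ fun i _ => continuousOn_const.mul ?_
    exact ContinuousOn.zpow₀ continuousOn_id _ fun t ht => Or.inl (ha.trans_le ht.1).ne'
  have hge : 1 ≤ tailSum α a 0 :=
    calc 1 = a * a⁻¹ := (mul_inv_cancel₀ ha.ne').symm
      _ ≤ α ℓ * a ^ (-(ℓ : ℤ) - 1) := by
          rw [← _root_.zpow_neg_one]
          exact mul_le_mul (min_le_right _ _)
            (zpow_le_zpow_right_of_le_one₀ ha (min_le_left _ _) (by omega)) (by positivity) hℓ.le
      _ ≤ tailSum α a 0 := by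
          rw [tailSum_zero]
          exact Finset.single_le_sum (f := fun i : Fin p => α i * a ^ (-(i : ℤ) - 1))
            (fun i _ => mul_nonneg (hα i) (zpow_pos ha _).le) (Finset.mem_univ ℓ)
  have hle : tailSum α b 0 ≤ 1 :=
    calc tailSum α b 0 ≤ ∑ i, α i * b⁻¹ := by
          rw [tailSum_zero]
          refine Finset.sum_le_sum fun i _ => mul_le_mul_of_nonneg_left ?_ (hα i)
          rw [← _root_.zpow_neg_one]
          exact zpow_le_zpow_right₀ (le_max_left _ _) (by omega)
      _ ≤ 1 := by
          rw [← Finset.sum_mul]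
          exact mul_inv_le_one_of_le₀ (le_max_right _ _) (by positivity)
  obtain ⟨c, hc, hc1⟩ := intermediate_value_Icc' hab hcont ⟨hle, hge⟩
  exact ⟨c, ha.trans_le hc.1, hc1⟩

theorem companion_transpose_mulVec_tailSum (hc : c ≠ 0) (hroot : tailSum α c 0 = 1) :
    (companion p α)ᵀ *ᵥ (fun i : Fin p => tailSum α c i) = c • fun i : Fin p => tailSum α c i := by
  ext j
  rw [companion_transpose_mulVec α (tailSum_eq_zero_of_le α c le_rfl), hroot, Pi.smul_apply,
    smul_eq_mul, mul_tailSum hc, mul_one]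

theorem companion_mulVec_zpow (hc : c ≠ 0) (hroot : tailSum α c 0 = 1) :
    companion p α *ᵥ (fun i : Fin p => c ^ (-(i : ℤ))) = c • fun i : Fin p => c ^ (-(i : ℤ)) := by
  ext i
  rw [companion_mulVec α (fun i => c ^ (-(i : ℤ))), Pi.smul_apply, smul_eq_mul]
  split_ifs with hi
  · calc ∑ j, α j * c ^ (-(j : ℤ)) = c * tailSum α c 0 := by
          rw [tailSum_zero, Finset.mul_sum]
          refine Finset.sum_congr rfl fun ℓ _ => ?_
          rw [mul_left_comm, ← zpow_one_add₀ hc]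
          ring_nf
      _ = c * c ^ (-(i : ℤ)) := by simp [hroot, hi]
  · rw [← zpow_one_add₀ hc]
    congr 1
    omega

theorem specRad_companion (hp : 0 < p) (hα : ∀ i, 0 ≤ α i)
    (hlast : 0 < α ⟨p - 1, Nat.sub_lt hp one_pos⟩) (hc : 0 < c) (hroot : tailSum α c 0 = 1) :
    specRad (companion p α) = c := by
  have hu : (fun i : Fin p => c ^ (-(i : ℤ))) ≠ 0 := fun h => by simpa using congrFun h ⟨0, hp⟩
  refine specRad_eq_of_mem_spectrum hc.le
    (map_mem_spectrum_map_of_mulVec_eq_smul Complex.ofRealHom hu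
      (companion_mulVec_zpow hc.ne' hroot)) fun z hz => ?_
  exact norm_le_of_mem_spectrum_of_pos_left_eigenvector (companion_nonneg hα)
    (fun i => tailSum_pos hα hlast hc (by simp; omega))
    (companion_transpose_mulVec_tailSum hc.ne' hroot) hz

end tailSum

theorem perronV_eq_smul_tailSum {p : ℕ} (α : Fin p → ℝ) (c : ℝ) :
    perronV p α c = ((∑ k : Fin p, c ^ (-(k : ℤ))) /
      ∑ k : Fin p, ((k : ℕ) + 1 : ℝ) * α k * c ^ (-((k : ℕ) + 1 : ℤ))) •
        fun i : Fin p => tailSum α c i :=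
  rfl

/-- `v` has strictly positive coordinates, `Aᵀ v = r v`, and `uᵀ v = 1`. -/
theorem perronV_left_eigenvector
    (p : ℕ) (hp : 0 < p) (α : Fin p → ℝ)
    (hα : ∀ i, α i ∈ Set.Icc (0 : ℝ) 1)
    (hαp : 0 < α ⟨p - 1, by omega⟩) :
    (∀ i : Fin p, 0 < perronV p α (specRad (companion p α)) i) ∧
    ((companion p α)ᵀ.mulVec (perronV p α (specRad (companion p α)))
      = specRad (companion p α) • perronV p α (specRad (companion p α))) ∧
    (∑ i : Fin p, perronU p (specRad (companion p α)) i *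
        perronV p α (specRad (companion p α)) i = 1) := by
  have hα0 : ∀ i, 0 ≤ α i := fun i => (hα i).1
  obtain ⟨c, hc, hroot⟩ := exists_pos_tailSum_zero_eq_one hα0 hαp
  have hT : ∀ i : Fin p, 0 < tailSum α c i := fun i => tailSum_pos hα0 hαp hc (by simp; omega)
  rw [specRad_companion hp hα0 hαp hc hroot, perronV_eq_smul_tailSum,
    ← sum_zpow_mul_tailSum hc.ne']
  have hS : 0 < ∑ k : Fin p, c ^ (-(k : ℤ)) :=
    Finset.sum_pos (fun k _ => zpow_pos hc _) ⟨⟨0, hp⟩, Finset.mem_univ _⟩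
  have hD : 0 < ∑ i : Fin p, c ^ (-(i : ℤ)) * tailSum α c i :=
    Finset.sum_pos (fun i _ => mul_pos (zpow_pos hc _) (hT i)) ⟨⟨0, hp⟩, Finset.mem_univ _⟩
  refine ⟨fun i => mul_pos (div_pos hS hD) (hT i), ?_, ?_⟩
  · rw [mulVec_smul, companion_transpose_mulVec_tailSum hc.ne' hroot, smul_comm]
  · rw [← div_self hD.ne', Finset.sum_div _ (fun i : Fin p => c ^ (-(i : ℤ)) * tailSum α c i)]
    refine Finset.sum_congr rfl fun i _ => ?_
    simp only [perronU, Pi.smul_apply, smul_eq_mul]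
    field_simp

end
end
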